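/- arXiv:1906.12116 — 2 statements merged into one kernel-verified Lean document; each statement's English description precedes it below -/
import Mathlib

section
/- Fix ρ > 0 and τ > 0 with τ < ρσ. Then the function d₁ ↦ f(d₁,N₂;ρ,τ) is strictly concave on the interval [0, g(0,0,N₁;ρ)], and its unique maximizer on this interval is d₁ = g(0,0,N₁+N₂;ρ). -/
/-!
Put `C = B(0,0)` and `psi x = σ x + ρ σ² x²`; then `y = g(d,N₁,N₂)` is the nonnegative solution
of `N₁ psi d + N₂ psi y = C`. Eliminating `y²` through this constraint writes `f` as an affine
function of `d` plus a multiple of `√(1 + (4ρ/N₂) B(d,N₁))` whose coefficient is positive exactly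
because `τ < ρσ`; the radicand is a strictly concave quadratic, so `f` is strictly concave.
Eliminating instead the linear terms gives `σ f = C - (ρσ² - τσ)(N₁ d² + N₂ y²)`, so maximizing `f`
amounts to minimizing `N₁ d² + N₂ y²` along the constraint. The point `d = y = g(0,0,N₁+N₂)` lies
on it, and comparing `psi` with its tangent line there shows that it is the unique minimizer.
-/

/-- `B(d,N;ρ)` with parameters `σ φ D T`. -/
noncomputable def B (σ φ D T ρ N d : ℝ) : ℝ :=
  φ * D * (1 + ρ * φ * D / T) - σ * N * d - ρ * σ ^ 2 * N * d ^ 2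

/-- `g(d,N',N;ρ)` with parameters `σ φ D T`. -/
noncomputable def g (σ φ D T ρ N' N d : ℝ) : ℝ :=
  (-1 + Real.sqrt (1 + (4 * ρ / N) * B σ φ D T ρ N' d)) / (2 * σ * ρ)

/-- `f(d₁,N₂;ρ,τ)` with parameters `σ φ D T` and `N₁`. -/
noncomputable def f (σ φ D T ρ τ N₁ N₂ d₁ : ℝ) : ℝ :=
  N₁ * d₁ + N₂ * g σ φ D T ρ N₁ N₂ d₁ +
    τ * (N₁ * d₁ ^ 2 + N₂ * (g σ φ D T ρ N₁ N₂ d₁) ^ 2)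

open Set

/-- `g σ φ D T ρ N' N d` is the nonnegative root `x` of `N * psi σ ρ x = B σ φ D T ρ N' d`. -/
def psi (σ ρ x : ℝ) : ℝ := σ * x + ρ * σ ^ 2 * x ^ 2

lemma StrictConcaveOn.sqrt {E : Type*} [AddCommMonoid E] [Module ℝ E] {s : Set E} {h : E → ℝ}
    (hh : StrictConcaveOn ℝ s h) (hh₀ : ∀ x ∈ s, 0 ≤ h x) :
    StrictConcaveOn ℝ s fun x => √(h x) :=
  ⟨hh.1, fun x hx y hy hxy _ _ ha hb hab =>
    (Real.strictConcaveOn_sqrt.concaveOn.2 (hh₀ x hx) (hh₀ y hy) ha.le hb.le hab).trans_lt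
      (Real.sqrt_lt_sqrt (add_nonneg (smul_nonneg ha.le (hh₀ x hx)) (smul_nonneg hb.le (hh₀ y hy)))
        (hh.2 hx hy hxy ha hb hab))⟩

lemma StrictConcaveOn.affine_add_mul {s : Set ℝ} {h : ℝ → ℝ} (hh : StrictConcaveOn ℝ s h)
    (a b : ℝ) {c : ℝ} (hc : 0 < c) : StrictConcaveOn ℝ s fun x => a + b * x + c * h x :=
  ⟨hh.1, fun x hx y hy hxy α β hα hβ hαβ => by
    have key := mul_lt_mul_of_pos_left (hh.2 hx hy hxy hα hβ hαβ) hc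
    simp only [smul_eq_mul] at key ⊢
    linear_combination key + a * hαβ⟩

section

variable {σ φ D T ρ τ : ℝ}

lemma B_eq_sub_mul_psi (N d : ℝ) : B σ φ D T ρ N d = B σ φ D T ρ 0 0 - N * psi σ ρ d := by
  unfold B psi; ring

lemma B_zero_pos (hφ : 0 < φ) (hD : 0 < D) (hT : 0 < T) (hρ : 0 < ρ) :
    0 < B σ φ D T ρ 0 0 := by
  unfold B; simp only [mul_zero, zero_mul, sub_zero]; positivity

lemma psi_strictMonoOn (hσ : 0 < σ) (hρ : 0 < ρ) : StrictMonoOn (psi σ ρ) (Ici 0) := by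
  intro x hx y hy hxy
  have hxy₀ : (0 : ℝ) ≤ x + y := add_nonneg hx hy
  have : 0 < (y - x) * (σ + ρ * σ ^ 2 * (x + y)) := mul_pos (by linarith) (by positivity)
  unfold psi; linear_combination this

lemma strictConcaveOn_B (hσ : 0 < σ) (hρ : 0 < ρ) {N : ℝ} (hN : 0 < N) :
    StrictConcaveOn ℝ univ (B σ φ D T ρ N) := by
  refine ⟨convex_univ, fun x _ y _ hxy a b ha hb hab => ?_⟩
  obtain rfl : b = 1 - a := by linarith
  have : 0 < ρ * σ ^ 2 * N * (a * (1 - a) * (x - y) ^ 2) := by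
    have := sq_pos_of_ne_zero (sub_ne_zero.mpr hxy)
    positivity
  simp only [smul_eq_mul]; unfold B; linear_combination this

lemma g_nonneg (hσ : 0 < σ) (hρ : 0 < ρ) {N' N d : ℝ} (hN : 0 < N)
    (hB : 0 ≤ B σ φ D T ρ N' d) : 0 ≤ g σ φ D T ρ N' N d := by
  have : 1 ≤ √(1 + 4 * ρ / N * B σ φ D T ρ N' d) :=
    Real.one_le_sqrt.mpr (le_add_of_nonneg_right (mul_nonneg (by positivity) hB))
  unfold g
  exact div_nonneg (by linarith) (by positivity)

lemma mul_psi_g (hσ : 0 < σ) (hρ : 0 < ρ) {N' N d : ℝ} (hN : 0 < N)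
    (hB : 0 ≤ B σ φ D T ρ N' d) : N * psi σ ρ (g σ φ D T ρ N' N d) = B σ φ D T ρ N' d := by
  have hs := Real.sq_sqrt (add_nonneg zero_le_one (mul_nonneg (by positivity : 0 ≤ 4 * ρ / N) hB))
  unfold g psi
  generalize √(1 + 4 * ρ / N * B σ φ D T ρ N' d) = s at hs ⊢
  field_simp at hs ⊢
  linear_combination hs

lemma g_eq_of_mul_psi_eq (hσ : 0 < σ) (hρ : 0 < ρ) {N' N d x : ℝ} (hN : 0 < N) (hx : 0 ≤ x)
    (h : N * psi σ ρ x = B σ φ D T ρ N' d) : g σ φ D T ρ N' N d = x := by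
  have hB : 0 ≤ B σ φ D T ρ N' d := h ▸ mul_nonneg hN.le (by unfold psi; positivity)
  exact (psi_strictMonoOn hσ hρ).injOn (g_nonneg hσ hρ hN hB) hx
    (mul_left_cancel₀ hN.ne' ((mul_psi_g hσ hρ hN hB).trans h.symm))

lemma g_le_g_of_le (hσ : 0 < σ) (hρ : 0 < ρ) {N' N M d : ℝ} (hB : 0 ≤ B σ φ D T ρ N' d)
    (hN : 0 < N) (hNM : N ≤ M) : g σ φ D T ρ N' M d ≤ g σ φ D T ρ N' N d := by
  unfold g
  gcongr

lemma B_nonneg_of_mem_Icc (hσ : 0 < σ) (hρ : 0 < ρ) (hC : 0 ≤ B σ φ D T ρ 0 0) {N d : ℝ}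
    (hN : 0 < N) (hd : d ∈ Icc 0 (g σ φ D T ρ 0 N 0)) : 0 ≤ B σ φ D T ρ N d := by
  have hg := mul_psi_g hσ hρ hN hC
  have hle := (psi_strictMonoOn hσ hρ).monotoneOn hd.1 (hd.1.trans hd.2) hd.2
  have := mul_le_mul_of_nonneg_left hle hN.le
  rw [B_eq_sub_mul_psi]
  linarith

lemma f_eq_affine_add_mul_sqrt (hσ : 0 < σ) (hρ : 0 < ρ) {N₁ N₂ d : ℝ} (hN₂ : 0 < N₂)
    (hB : 0 ≤ B σ φ D T ρ N₁ d) :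
    f σ φ D T ρ τ N₁ N₂ d =
      (τ * B σ φ D T ρ 0 0 / (σ ^ 2 * ρ) + τ * N₂ / (2 * σ ^ 2 * ρ ^ 2) - N₂ / (2 * σ * ρ))
        + (N₁ - τ * N₁ / (σ * ρ)) * d
        + N₂ * (ρ * σ - τ) / (2 * ρ ^ 2 * σ ^ 2) * √(1 + 4 * ρ / N₂ * B σ φ D T ρ N₁ d) := by
  have hs := Real.sq_sqrt (add_nonneg zero_le_one (mul_nonneg (by positivity : 0 ≤ 4 * ρ / N₂) hB))
  unfold f g
  rw [B_eq_sub_mul_psi] at hs ⊢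
  generalize √(1 + 4 * ρ / N₂ * (B σ φ D T ρ 0 0 - N₁ * psi σ ρ d)) = s at hs ⊢
  unfold psi at hs
  field_simp at hs ⊢
  linear_combination τ * hs

theorem strictConcaveOn_f (hσ : 0 < σ) (hρ : 0 < ρ) (hτρ : τ < ρ * σ)
    (hC : 0 ≤ B σ φ D T ρ 0 0) {N₁ N₂ : ℝ} (hN₁ : 0 < N₁) (hN₂ : 0 < N₂) :
    StrictConcaveOn ℝ (Icc 0 (g σ φ D T ρ 0 N₁ 0)) (f σ φ D T ρ τ N₁ N₂) := by
  have hB d (hd : d ∈ Icc 0 (g σ φ D T ρ 0 N₁ 0)) := B_nonneg_of_mem_Icc hσ hρ hC hN₁ hd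
  have hu := ((strictConcaveOn_B (φ := φ) (D := D) (T := T) hσ hρ hN₁).subset (subset_univ _)
    (convex_Icc 0 (g σ φ D T ρ 0 N₁ 0))).affine_add_mul 1 0 (by positivity : 0 < 4 * ρ / N₂)
  simp only [zero_mul, add_zero] at hu
  have hγ : 0 < N₂ * (ρ * σ - τ) / (2 * ρ ^ 2 * σ ^ 2) := by
    have := sub_pos.mpr hτρ; positivity
  refine ((hu.sqrt fun d hd => ?_).affine_add_mul _ _ hγ).congr
    fun d hd => (f_eq_affine_add_mul_sqrt hσ hρ hN₂ (hB d hd)).symm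
  exact add_nonneg zero_le_one (mul_nonneg (by positivity) (hB d hd))

lemma mul_f_eq_B_sub (hσ : 0 < σ) (hρ : 0 < ρ) {N₁ N₂ d : ℝ} (hN₂ : 0 < N₂)
    (hB : 0 ≤ B σ φ D T ρ N₁ d) :
    σ * f σ φ D T ρ τ N₁ N₂ d = B σ φ D T ρ 0 0
      - (ρ * σ ^ 2 - τ * σ) * (N₁ * d ^ 2 + N₂ * g σ φ D T ρ N₁ N₂ d ^ 2) := by
  have h := mul_psi_g hσ hρ hN₂ hB
  rw [B_eq_sub_mul_psi] at h
  unfold f psi at *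
  linear_combination h

/-- `psi` has slope `σ * (1 + 2 * ρ * σ * c) > 0` at `c`, and comparing it with its tangent line
there gives `σ * (1 + 2 * ρ * σ * c) * (excess) = σ * (n₁ * (x - c) ^ 2 + n₂ * (y - c) ^ 2)`. -/
lemma add_mul_sq_lt_of_psi_eq (hσ : 0 < σ) (hρ : 0 < ρ) {n₁ n₂ x y c : ℝ} (hn₁ : 0 < n₁)
    (hn₂ : 0 ≤ n₂) (hc : 0 ≤ c) (hxc : x ≠ c)
    (h : n₁ * psi σ ρ x + n₂ * psi σ ρ y = (n₁ + n₂) * psi σ ρ c) :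
    (n₁ + n₂) * c ^ 2 < n₁ * x ^ 2 + n₂ * y ^ 2 := by
  have hid : σ * (1 + 2 * ρ * σ * c) * (n₁ * x ^ 2 + n₂ * y ^ 2 - (n₁ + n₂) * c ^ 2)
      = σ * (n₁ * (x - c) ^ 2 + n₂ * (y - c) ^ 2) := by
    unfold psi at h; linear_combination 2 * c * h
  have hpos : 0 < σ * (n₁ * (x - c) ^ 2 + n₂ * (y - c) ^ 2) := by
    have := sq_pos_of_ne_zero (sub_ne_zero.mpr hxc); positivity
  have : 0 < n₁ * x ^ 2 + n₂ * y ^ 2 - (n₁ + n₂) * c ^ 2 :=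
    pos_of_mul_pos_right (hid ▸ hpos) (by positivity)
  linarith

theorem f_lt_f_of_ne_g_zero_add (hσ : 0 < σ) (hρ : 0 < ρ) (hτρ : τ < ρ * σ)
    (hC : 0 ≤ B σ φ D T ρ 0 0) {N₁ N₂ d : ℝ} (hN₁ : 0 < N₁) (hN₂ : 0 < N₂)
    (hd : d ∈ Icc 0 (g σ φ D T ρ 0 N₁ 0)) (hne : d ≠ g σ φ D T ρ 0 (N₁ + N₂) 0) :
    f σ φ D T ρ τ N₁ N₂ d < f σ φ D T ρ τ N₁ N₂ (g σ φ D T ρ 0 (N₁ + N₂) 0) := by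
  set c := g σ φ D T ρ 0 (N₁ + N₂) 0
  have hc₀ : 0 ≤ c := g_nonneg hσ hρ (by linarith) hC
  have hcC : (N₁ + N₂) * psi σ ρ c = B σ φ D T ρ 0 0 := mul_psi_g hσ hρ (by linarith) hC
  have hc : c ∈ Icc 0 (g σ φ D T ρ 0 N₁ 0) := ⟨hc₀, g_le_g_of_le hσ hρ hC hN₁ (by linarith)⟩
  have hgc : g σ φ D T ρ N₁ N₂ c = c :=
    g_eq_of_mul_psi_eq hσ hρ hN₂ hc₀ (by rw [B_eq_sub_mul_psi]; linear_combination hcC)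
  have hgd := mul_psi_g hσ hρ hN₂ (B_nonneg_of_mem_Icc hσ hρ hC hN₁ hd)
  rw [B_eq_sub_mul_psi] at hgd
  have hQ := add_mul_sq_lt_of_psi_eq (y := g σ φ D T ρ N₁ N₂ d) hσ hρ hN₁ hN₂.le hc₀ hne
    (by linear_combination hgd - hcC)
  have hστ : 0 < ρ * σ ^ 2 - τ * σ := by
    have := mul_pos hσ (sub_pos.mpr hτρ); linarith
  have := mul_lt_mul_of_pos_left hQ hστ
  refine lt_of_mul_lt_mul_left ?_ hσ.le
  rw [mul_f_eq_B_sub hσ hρ hN₂ (B_nonneg_of_mem_Icc hσ hρ hC hN₁ hd),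
    mul_f_eq_B_sub hσ hρ hN₂ (B_nonneg_of_mem_Icc hσ hρ hC hN₁ hc), hgc]
  linarith

end

theorem stmt_5_general (σ φ D T : ℝ) (hσ : 0 < σ) (hφ : 0 < φ) (hD : 0 < D) (hT : 0 < T)
    (N₁ N₂ : ℕ) (hN₁ : 0 < N₁) (hN₂ : 0 < N₂)
    (ρ τ : ℝ) (hρ : 0 < ρ) (hτρ : τ < ρ * σ) :
    StrictConcaveOn ℝ (Set.Icc 0 (g σ φ D T ρ 0 N₁ 0)) (fun d₁ => f σ φ D T ρ τ N₁ N₂ d₁) ∧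
    g σ φ D T ρ 0 ((N₁ : ℝ) + (N₂ : ℝ)) 0 ∈ Set.Icc 0 (g σ φ D T ρ 0 N₁ 0) ∧
    ∀ d₁ ∈ Set.Icc 0 (g σ φ D T ρ 0 N₁ 0), d₁ ≠ g σ φ D T ρ 0 ((N₁ : ℝ) + (N₂ : ℝ)) 0 →
      f σ φ D T ρ τ N₁ N₂ d₁ < f σ φ D T ρ τ N₁ N₂ (g σ φ D T ρ 0 ((N₁ : ℝ) + (N₂ : ℝ)) 0) := by
  have hn₁ : (0 : ℝ) < N₁ := Nat.cast_pos.mpr hN₁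
  have hn₂ : (0 : ℝ) < N₂ := Nat.cast_pos.mpr hN₂
  have hC := (B_zero_pos (σ := σ) hφ hD hT hρ).le
  refine ⟨strictConcaveOn_f hσ hρ hτρ hC hn₁ hn₂,
    ⟨g_nonneg hσ hρ (by positivity) hC, g_le_g_of_le hσ hρ hC hn₁ (by simp)⟩,
    fun d hd hne => f_lt_f_of_ne_g_zero_add hσ hρ hτρ hC hn₁ hn₂ hd hne⟩

/-- if `τ < ρσ` then `f(·,N₂;ρ,τ)` is strictly concave on
`[0, g(0,0,N₁;ρ)]`, with unique maximizer `g(0,0,N₁+N₂;ρ)`. -/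
theorem stmt_5 (σ φ D T : ℝ) (hσ : 0 < σ) (hφ : 0 < φ) (hD : 0 < D) (hT : 0 < T)
    (N₁ N₂ : ℕ) (hN₁ : 0 < N₁) (hN₂ : 0 < N₂)
    (ρ τ : ℝ) (hρ : 0 < ρ) (hτ : 0 < τ) (hτρ : τ < ρ * σ) :
    StrictConcaveOn ℝ (Set.Icc 0 (g σ φ D T ρ 0 N₁ 0)) (fun d₁ => f σ φ D T ρ τ N₁ N₂ d₁) ∧
    g σ φ D T ρ 0 ((N₁ : ℝ) + (N₂ : ℝ)) 0 ∈ Set.Icc 0 (g σ φ D T ρ 0 N₁ 0) ∧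
    ∀ d₁ ∈ Set.Icc 0 (g σ φ D T ρ 0 N₁ 0), d₁ ≠ g σ φ D T ρ 0 ((N₁ : ℝ) + (N₂ : ℝ)) 0 →
      f σ φ D T ρ τ N₁ N₂ d₁ < f σ φ D T ρ τ N₁ N₂ (g σ φ D T ρ 0 ((N₁ : ℝ) + (N₂ : ℝ)) 0) :=
  stmt_5_general σ φ D T hσ hφ hD hT N₁ N₂ hN₁ hN₂ ρ τ hρ hτρ
end

section
/- Let N₂ᴬ and N₂ᴮ be positive integers with N₂ᴬ < N₂ᴮ ≤ T and N₁ + N₂ᴬ ≥ T. Then r₁⁻(N₂ᴬ) > r₁⁻(N₂ᴮ). -/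
/-!
The radicand of `r₁⁻(η)` factors as `η (N₁ + η - T) / (N₁ T)`. On `T - N₁ ≤ η ≤ T`, `η ≥ 0`, this
lies in `[0, 1]` and increases strictly with `η`, so the numerator `1 - √·` is nonnegative and
decreasing while the denominator `σ (N₁ + η)` is positive and increasing.
-/

/-- `r₁⁻(η)` with parameters `σ φ D T N₁`. -/
noncomputable def r₁m (σ φ D T N₁ η : ℝ) : ℝ :=
  φ * D * (1 - Real.sqrt (1 + (N₁ + η) * (η - T) / (N₁ * T))) / (σ * (N₁ + η))

lemma one_add_mul_sub_div_eq {n T : ℝ} (hn : n ≠ 0) (hT : T ≠ 0) (x : ℝ) :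
    1 + (n + x) * (x - T) / (n * T) = x * (n + x - T) / (n * T) := by
  field_simp
  ring

lemma mul_add_sub_lt_mul_add_sub {n T a b : ℝ} (ha : 0 ≤ a) (hab : a < b) (haT : T ≤ n + a) :
    a * (n + a - T) < b * (n + b - T) := by
  have hfactor : b * (n + b - T) - a * (n + a - T) = (b - a) * ((n + a - T) + b) := by ring
  have : 0 < (b - a) * ((n + a - T) + b) := mul_pos (by linarith) (by linarith)
  linarith

lemma mul_add_sub_le_mul {n T b : ℝ} (hn : 0 ≤ n) (hb : 0 ≤ b) (hbT : b ≤ T) :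
    b * (n + b - T) ≤ n * T := by
  have hfactor : n * T - b * (n + b - T) = (T - b) * (n + b) := by ring
  have : 0 ≤ (T - b) * (n + b) := mul_nonneg (by linarith) (by linarith)
  linarith

theorem r₁m_strictAntiOn {σ φ D T N₁ : ℝ} (hσ : 0 < σ) (hφ : 0 < φ) (hD : 0 < D) (hN₁ : 0 < N₁) :
    StrictAntiOn (r₁m σ φ D T N₁) (Set.Icc (T - N₁) T ∩ Set.Ici 0) := by
  rintro a ⟨⟨haT, -⟩, ha : 0 ≤ a⟩ b ⟨⟨-, hbT⟩, -⟩ hab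
  have hT : 0 < T := by linarith
  have hnT : 0 < N₁ * T := mul_pos hN₁ hT
  unfold r₁m
  rw [one_add_mul_sub_div_eq hN₁.ne' hT.ne', one_add_mul_sub_div_eq hN₁.ne' hT.ne']
  have hsqrt_lt : √(a * (N₁ + a - T) / (N₁ * T)) < √(b * (N₁ + b - T) / (N₁ * T)) :=
    Real.sqrt_lt_sqrt (div_nonneg (mul_nonneg ha (by linarith)) hnT.le)
      (div_lt_div_of_pos_right (mul_add_sub_lt_mul_add_sub ha hab (by linarith)) hnT)
  have hsqrt_le_one : √(b * (N₁ + b - T) / (N₁ * T)) ≤ 1 :=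
    Real.sqrt_le_one.mpr ((div_le_one hnT).mpr (mul_add_sub_le_mul hN₁.le (by linarith) hbT))
  have hφD : 0 < φ * D := mul_pos hφ hD
  have hden : 0 < σ * (N₁ + a) := mul_pos hσ (by linarith)
  calc φ * D * (1 - √(b * (N₁ + b - T) / (N₁ * T))) / (σ * (N₁ + b))
      ≤ φ * D * (1 - √(b * (N₁ + b - T) / (N₁ * T))) / (σ * (N₁ + a)) := by
        have : 0 ≤ 1 - √(b * (N₁ + b - T) / (N₁ * T)) := by linarith
        gcongr
    _ < φ * D * (1 - √(a * (N₁ + a - T) / (N₁ * T))) / (σ * (N₁ + a)) := by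
        gcongr

theorem stmt_10_general (σ φ D T : ℝ) (hσ : 0 < σ) (hφ : 0 < φ) (hD : 0 < D)
    (N₁ N₂A N₂B : ℕ) (hN₁ : 0 < N₁)
    (hAB : N₂A < N₂B) (hBT : (N₂B : ℝ) ≤ T) (hsum : T ≤ (N₁ : ℝ) + N₂A) :
    r₁m σ φ D T N₁ N₂B < r₁m σ φ D T N₁ N₂A := by
  have hAB' : (N₂A : ℝ) < N₂B := by exact_mod_cast hAB
  have hA : (N₂A : ℝ) ∈ Set.Icc (T - N₁) T ∩ Set.Ici 0 :=
    ⟨⟨by linarith, by linarith⟩, Set.mem_Ici.mpr N₂A.cast_nonneg⟩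
  have hB : (N₂B : ℝ) ∈ Set.Icc (T - N₁) T ∩ Set.Ici 0 :=
    ⟨⟨by linarith, hBT⟩, Set.mem_Ici.mpr N₂B.cast_nonneg⟩
  exact r₁m_strictAntiOn hσ hφ hD (Nat.cast_pos.mpr hN₁) hA hB hAB'

/-- if `N₂ᴬ < N₂ᴮ ≤ T` and `N₁ + N₂ᴬ ≥ T` then `r₁⁻(N₂ᴬ) > r₁⁻(N₂ᴮ)`. -/
theorem stmt_10 (σ φ D T : ℝ) (hσ : 0 < σ) (hφ : 0 < φ) (hD : 0 < D) (hT : 0 < T)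
    (N₁ N₂A N₂B : ℕ) (hN₁ : 0 < N₁) (hN₂A : 0 < N₂A) (hN₂B : 0 < N₂B)
    (hAB : N₂A < N₂B) (hBT : (N₂B : ℝ) ≤ T) (hsum : T ≤ (N₁ : ℝ) + N₂A) :
    r₁m σ φ D T N₁ N₂B < r₁m σ φ D T N₁ N₂A :=
  stmt_10_general σ φ D T hσ hφ hD N₁ N₂A N₂B hN₁ hAB hBT hsum
end
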